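/- arXiv:1802.05158 — 3 statements merged into one kernel-verified Lean document; each statement's English description precedes it below -/
import Mathlib

section
/- Let G be a graph with length-function ℓ and let C ⊆ G be a cycle. Then C is ℓ-geodesic if and only if there do not exist cycles D₁, D₂ of G with ℓ(D₁) < ℓ(C) and ℓ(D₂) < ℓ(C) such that C is the 𝔽₂-sum of D₁ and D₂ (i.e., the edge set of C is the symmetric difference of the edge sets of D₁ and D₂). -/
/-!
Read finite edge sets as `𝔽₂`-chains, with boundary `parityDegree`. A chain of a cycle `C` with
zero boundary is `∅` or `E(C)`.

If `C` is geodesic and `D` is a closed trail, replace every maximal subtrail of `D` outside `C` by a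
geodesic path of `C` between its ends. This turns `E(D) ∩ E(C)` into a chain `T` of `C` with zero
boundary at `ℓ`-cost at most `ℓ(E(D) \ E(C))`; as `T` is `∅` or `E(C)`, one of
`ℓ(E(D) ∩ E(C))`, `ℓ(E(C) \ E(D))` is at most `ℓ(E(D) \ E(C))`. For `E(C) = E(D₁) ∆ E(D₂)` this
says `ℓ(C) ≤ ℓ(D₁)` or `ℓ(C) ≤ ℓ(D₂)`.

Conversely, if `C` is not geodesic there is a path strictly shorter than every path of `C` between
its ends; a shortest such path meets `C` only in its ends `a`, `b`, and together with the two
`a`–`b` arcs of `C` it forms two cycles shorter than `C` whose sum is `C`.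
-/

open SimpleGraph

/-- The `ℓ`-length of a walk: the sum of the lengths of its edges. -/
def walkLen {V : Type u} {G : SimpleGraph V} (ℓ : Sym2 V → ℝ) {a b : V} (p : G.Walk a b) : ℝ :=
  (p.edges.map ℓ).sum

/-- A closed walk `c` is `ℓ`-geodesic: between any two of its vertices it contains a path
whose `ℓ`-length is minimum among all paths of `G` between those vertices. -/
def IsGeodesic {V : Type u} {G : SimpleGraph V} (ℓ : Sym2 V → ℝ) {v : V} (c : G.Walk v v) :
    Prop :=
  ∀ a ∈ c.support, ∀ b ∈ c.support,
    ∃ p : G.Walk a b, p.IsPath ∧ (∀ e ∈ p.edges, e ∈ c.edges) ∧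
      ∀ q : G.Walk a b, q.IsPath → walkLen ℓ p ≤ walkLen ℓ q

open Finset SimpleGraph.Walk
open scoped symmDiff

namespace Finset

variable {α R : Type*} [DecidableEq α]

theorem sum_symmDiff [AddCommMonoid R] (s t : Finset α) (f : α → R) :
    ∑ x ∈ s ∆ t, f x = ∑ x ∈ s \ t, f x + ∑ x ∈ t \ s, f x :=
  sum_union disjoint_sdiff_sdiff

theorem sum_symmDiff_of_charTwo [CommRing R] [CharP R 2] (s t : Finset α) (f : α → R) :
    ∑ x ∈ s ∆ t, f x = ∑ x ∈ s, f x + ∑ x ∈ t, f x := by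
  rw [sum_symmDiff, ← sum_inter_add_sum_sdiff s t, ← sum_inter_add_sum_sdiff t s, inter_comm t s]
  linear_combination -CharTwo.add_self_eq_zero (∑ x ∈ s ∩ t, f x)

theorem sum_symmDiff_le [AddCommMonoid R] [PartialOrder R] [IsOrderedAddMonoid R]
    {s t : Finset α} {f : α → R} (hf : ∀ x ∈ s ∪ t, 0 ≤ f x) :
    ∑ x ∈ s ∆ t, f x ≤ ∑ x ∈ s, f x + ∑ x ∈ t, f x := by
  rw [sum_symmDiff]
  exact add_le_add
    (sum_le_sum_of_subset_of_nonneg sdiff_subset fun x hx _ => hf x (mem_union_left t hx))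
    (sum_le_sum_of_subset_of_nonneg sdiff_subset fun x hx _ => hf x (mem_union_right s hx))

end Finset

section ParityDegree

variable {V : Type*} [DecidableEq V] {G : SimpleGraph V}

def parityDegree (F : Finset (Sym2 V)) (x : V) : ZMod 2 :=
  #{e ∈ F | x ∈ e}

theorem parityDegree_empty : parityDegree (∅ : Finset (Sym2 V)) = 0 := by
  ext x
  simp [parityDegree]

theorem parityDegree_symmDiff (A B : Finset (Sym2 V)) :
    parityDegree (A ∆ B) = parityDegree A + parityDegree B := by
  ext x
  simp only [parityDegree, natCast_card_filter, Pi.add_apply]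
  exact sum_symmDiff_of_charTwo A B _

theorem parityDegree_edge {u v : V} (huv : u ≠ v) :
    parityDegree {s(u, v)} = Pi.single u 1 + Pi.single v 1 := by
  ext x
  by_cases hu : x = u <;> by_cases hv : x = v <;> simp_all [parityDegree, filter_singleton]

theorem pi_add_self {ι : Type*} (f : ι → ZMod 2) : f + f = 0 :=
  funext fun x => CharTwo.add_self_eq_zero (f x)

theorem SimpleGraph.Walk.IsTrail.parityDegree_edges {u v : V}
    {p : G.Walk u v} (hp : p.IsTrail) :
    parityDegree p.edges.toFinset = Pi.single u 1 + Pi.single v 1 := by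
  induction p with
  | nil => rw [edges_nil, List.toFinset_nil, parityDegree_empty, pi_add_self]
  | @cons u w v h p ih =>
    rw [isTrail_cons] at hp
    rw [edges_cons, List.toFinset_cons, insert_eq,
      ← symmDiff_eq_union (disjoint_singleton_left.2 (mt List.mem_toFinset.1 hp.2)),
      parityDegree_symmDiff, parityDegree_edge h.ne, ih hp.1]
    linear_combination pi_add_self (Pi.single w 1 : V → ZMod 2)

theorem SimpleGraph.Walk.IsPath.eq_empty_of_parityDegree_eq_zero {u v : V} {p : G.Walk u v}
    (hp : p.IsPath) {F : Finset (Sym2 V)} (hF : F ⊆ p.edges.toFinset)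
    (hdeg : ∀ x ≠ v, parityDegree F x = 0) : F = ∅ := by
  induction p with
  | nil => simpa using hF
  | @cons u w v h p ih =>
    rw [cons_isPath_iff] at hp
    rw [edges_cons, List.toFinset_cons] at hF
    have he : s(u, w) ∉ F := by
      intro he
      have hfilter : {f ∈ F | u ∈ f} = {s(u, w)} := by
        refine eq_singleton_iff_unique_mem.2 ⟨mem_filter.2 ⟨he, Sym2.mem_mk_left u w⟩, ?_⟩
        rintro f hf
        rw [mem_filter] at hf
        refine (mem_insert.1 (hF hf.1)).resolve_right fun hfp => hp.2 ?_
        exact p.mem_support_of_mem_edges (List.mem_toFinset.1 hfp) hf.2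
      have := hdeg u (fun huv => hp.2 (huv ▸ p.end_mem_support))
      simp [parityDegree, hfilter] at this
    exact ih hp.1 ((subset_insert_iff_of_notMem he).1 hF) hdeg

theorem SimpleGraph.Walk.IsCycle.eq_empty_or_eq_of_parityDegree_eq_zero {v : V}
    {c : G.Walk v v} (hc : c.IsCycle) {T : Finset (Sym2 V)} (hT : T ⊆ c.edges.toFinset)
    (hdeg : parityDegree T = 0) : T = ∅ ∨ T = c.edges.toFinset := by
  cases c with
  | nil => exact absurd rfl hc.ne_nil
  | @cons _ w _ h P =>
    have hP := (cons_isCycle_iff P h).1 hc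
    have hE : (cons h P).edges.toFinset = insert s(v, w) P.edges.toFinset := by
      rw [edges_cons, List.toFinset_cons]
    by_cases he : s(v, w) ∈ T
    · right
      refine (sdiff_eq_empty_iff_subset.1
        (hP.1.eq_empty_of_parityDegree_eq_zero ?_ ?_)).antisymm' hT
      · rw [hE, insert_sdiff_of_mem _ he]
        exact sdiff_subset
      · intro x _
        rw [← symmDiff_of_ge hT, parityDegree_symmDiff, hc.isTrail.parityDegree_edges, hdeg,
          pi_add_self, add_zero, Pi.zero_apply]
    · left
      rw [hE] at hT
      exact hP.1.eq_empty_of_parityDegree_eq_zero ((subset_insert_iff_of_notMem he).1 hT)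
        fun x _ => congrFun hdeg x

end ParityDegree

section WalkLength

variable {V : Type*} {G : SimpleGraph V} {ℓ : Sym2 V → ℝ}

@[simp]
theorem walkLen_nil {a : V} : walkLen ℓ (nil : G.Walk a a) = 0 := by
  simp [walkLen]

theorem walkLen_cons {a b d : V} (h : G.Adj a b) (p : G.Walk b d) :
    walkLen ℓ (cons h p) = ℓ s(a, b) + walkLen ℓ p := by
  simp [walkLen]

theorem walkLen_append {a b d : V} (p : G.Walk a b) (q : G.Walk b d) :
    walkLen ℓ (p.append q) = walkLen ℓ p + walkLen ℓ q := by
  simp [walkLen]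

theorem walkLen_reverse {a b : V} (p : G.Walk a b) : walkLen ℓ p.reverse = walkLen ℓ p := by
  simp [walkLen, List.sum_reverse]

theorem walkLen_nonneg (hℓ : ∀ e ∈ G.edgeSet, 0 ≤ ℓ e) {a b : V} (p : G.Walk a b) :
    0 ≤ walkLen ℓ p :=
  List.sum_nonneg <| by simpa using fun e he => hℓ e (p.edges_subset_edgeSet he)

theorem walkLen_bypass_le [DecidableEq V] (hℓ : ∀ e ∈ G.edgeSet, 0 ≤ ℓ e) {a b : V}
    (p : G.Walk a b) : walkLen ℓ p.bypass ≤ walkLen ℓ p :=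
  (p.edges_bypass_sublist_edges.map ℓ).sum_le_sum <| by
    simpa using fun e he => hℓ e (p.edges_subset_edgeSet he)

theorem SimpleGraph.Walk.IsTrail.walkLen_eq_sum [DecidableEq V] {a b : V} {p : G.Walk a b}
    (hp : p.IsTrail) : walkLen ℓ p = ∑ e ∈ p.edges.toFinset, ℓ e :=
  (List.sum_toFinset ℓ hp.edges_nodup).symm

end WalkLength

section GeodesicCycle

variable {V : Type*} [DecidableEq V] {G : SimpleGraph V} {ℓ : Sym2 V → ℝ} {v : V}
  {c : G.Walk v v}

theorem IsGeodesic.exists_chain_le_walkLen (hℓ : ∀ e ∈ G.edgeSet, 0 ≤ ℓ e)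
    (hgeo : IsGeodesic ℓ c) {a b : V} (ha : a ∈ c.support) (hb : b ∈ c.support)
    (w : G.Walk a b) :
    ∃ T ⊆ c.edges.toFinset, parityDegree T = Pi.single a 1 + Pi.single b 1 ∧
      ∑ e ∈ T, ℓ e ≤ walkLen ℓ w := by
  obtain ⟨g, hg, hgc, hmin⟩ := hgeo a ha b hb
  refine ⟨g.edges.toFinset, fun e he => List.mem_toFinset.2 (hgc e (List.mem_toFinset.1 he)),
    hg.isTrail.parityDegree_edges, ?_⟩
  rw [← hg.isTrail.walkLen_eq_sum]
  exact (hmin _ w.bypass_isPath).trans (walkLen_bypass_le hℓ w)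

/-- Induction along `w`: `Y` stands for the stretch walked since the trail last left `c`, at `p`.
When the trail returns to `c`, the geodesic property of `c` exchanges `Y` for a chain of `c` that
is no longer. -/
theorem IsGeodesic.exists_chain_near_trail (hℓ : ∀ e ∈ G.edgeSet, 0 ≤ ℓ e)
    (hgeo : IsGeodesic ℓ c) {u z : V} {w : G.Walk u z} (hw : w.IsTrail) (hz : z ∈ c.support)
    {p : V} (hp : p ∈ c.support) (Y : G.Walk p u) :
    ∃ T ⊆ c.edges.toFinset, parityDegree T = Pi.single p 1 + Pi.single z 1 ∧
      ∑ e ∈ (w.edges.toFinset ∩ c.edges.toFinset) ∆ T, ℓ e ≤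
        walkLen ℓ Y + ∑ e ∈ w.edges.toFinset \ c.edges.toFinset, ℓ e := by
  have hℓc : ∀ e ∈ c.edges.toFinset, 0 ≤ ℓ e := fun e he =>
    hℓ e (c.edges_subset_edgeSet (List.mem_toFinset.1 he))
  induction w generalizing p with
  | nil =>
    obtain ⟨T, hTc, hT, hTY⟩ := hgeo.exists_chain_le_walkLen hℓ hp hz Y
    refine ⟨T, hTc, hT, ?_⟩
    rw [edges_nil, List.toFinset_nil, empty_inter, empty_sdiff, sum_empty, add_zero,
      ← bot_eq_empty, bot_symmDiff]
    exact hTY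
  | @cons u u' z h w ih =>
    rw [isTrail_cons] at hw
    have hew : s(u, u') ∉ w.edges.toFinset := mt List.mem_toFinset.1 hw.2
    rw [edges_cons, List.toFinset_cons]
    by_cases he : s(u, u') ∈ c.edges
    · have heC : s(u, u') ∈ c.edges.toFinset := List.mem_toFinset.2 he
      obtain ⟨T₀, hT₀c, hT₀, hT₀Y⟩ :=
        hgeo.exists_chain_le_walkLen hℓ hp (c.fst_mem_support_of_mem_edges he) Y
      obtain ⟨T₁, hT₁c, hT₁, hT₁w⟩ := ih hw.1 hz (c.snd_mem_support_of_mem_edges he) nil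
      refine ⟨T₀ ∆ ({s(u, u')} ∆ T₁), ?_, ?_, ?_⟩
      · refine symmDiff_subset_union.trans (union_subset hT₀c ?_)
        exact symmDiff_subset_union.trans (union_subset (singleton_subset_iff.2 heC) hT₁c)
      · rw [parityDegree_symmDiff, parityDegree_symmDiff, parityDegree_edge h.ne, hT₀, hT₁]
        linear_combination pi_add_self (Pi.single u 1 : V → ZMod 2) +
          pi_add_self (Pi.single u' 1 : V → ZMod 2)
      · have hsplit : (insert s(u, u') w.edges.toFinset ∩ c.edges.toFinset) ∆
            (T₀ ∆ ({s(u, u')} ∆ T₁)) = ((w.edges.toFinset ∩ c.edges.toFinset) ∆ T₁) ∆ T₀ := by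
          ext f
          by_cases hf : f = s(u, u') <;>
            simp only [mem_symmDiff, mem_inter, mem_insert, mem_singleton, hf] <;> grind
        rw [hsplit, insert_sdiff_of_mem _ heC]
        refine (sum_symmDiff_le fun f hf => hℓc f ?_).trans ?_
        · exact union_subset (symmDiff_subset_union.trans
            (union_subset inter_subset_right hT₁c)) hT₀c hf
        · rw [walkLen_nil, zero_add] at hT₁w
          linarith
    · obtain ⟨T, hTc, hT, hTw⟩ := ih hw.1 hz hp (Y.concat h)
      refine ⟨T, hTc, hT, ?_⟩
      rw [insert_inter_of_notMem (mt List.mem_toFinset.1 he),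
        insert_sdiff_of_notMem _ (mt List.mem_toFinset.1 he),
        sum_insert (fun hmem => hew (mem_sdiff.1 hmem).1)]
      rw [concat_eq_append, walkLen_append, walkLen_cons, walkLen_nil, add_zero] at hTw
      linarith

theorem IsGeodesic.sum_inter_le_or_sum_sdiff_le (hℓ : ∀ e ∈ G.edgeSet, 0 ≤ ℓ e)
    (hc : c.IsCycle) (hgeo : IsGeodesic ℓ c) {u : V} {d : G.Walk u u} (hd : d.IsTrail) :
    ∑ e ∈ d.edges.toFinset ∩ c.edges.toFinset, ℓ e ≤
        ∑ e ∈ d.edges.toFinset \ c.edges.toFinset, ℓ e ∨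
      ∑ e ∈ c.edges.toFinset \ d.edges.toFinset, ℓ e ≤
        ∑ e ∈ d.edges.toFinset \ c.edges.toFinset, ℓ e := by
  have hℓd : ∀ e ∈ d.edges.toFinset, 0 ≤ ℓ e := fun e he =>
    hℓ e (d.edges_subset_edgeSet (List.mem_toFinset.1 he))
  rcases (d.edges.toFinset ∩ c.edges.toFinset).eq_empty_or_nonempty with h | ⟨e, he⟩
  · exact .inl (h ▸ sum_empty.trans_le (sum_nonneg fun e he => hℓd e (mem_sdiff.1 he).1))
  rw [mem_inter, List.mem_toFinset, List.mem_toFinset] at he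
  obtain ⟨a, ha⟩ : ∃ a, a ∈ e := ⟨_, Sym2.out_fst_mem e⟩
  have had := d.mem_support_of_mem_edges he.1 ha
  have hac := c.mem_support_of_mem_edges he.2 ha
  have hrot : (d.rotate a had).edges.toFinset = d.edges.toFinset :=
    List.toFinset_eq_of_perm _ _ (d.rotate_edges a had).perm
  obtain ⟨T, hTc, hT, hsum⟩ :=
    hgeo.exists_chain_near_trail hℓ (hd.rotate had) hac hac (nil : G.Walk a a)
  rw [hrot, walkLen_nil, zero_add] at hsum
  rw [pi_add_self] at hT
  rcases hc.eq_empty_or_eq_of_parityDegree_eq_zero hTc hT with rfl | rfl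
  · rw [← bot_eq_empty, symmDiff_bot] at hsum
    exact .inl hsum
  · right
    convert hsum using 2
    ext f
    simp only [mem_sdiff, mem_symmDiff, mem_inter]
    tauto

theorem IsGeodesic.walkLen_le_or_walkLen_le (hℓ : ∀ e ∈ G.edgeSet, 0 ≤ ℓ e) (hc : c.IsCycle)
    (hgeo : IsGeodesic ℓ c) {u₁ u₂ : V} {d₁ : G.Walk u₁ u₁} {d₂ : G.Walk u₂ u₂}
    (hd₁ : d₁.IsTrail) (hd₂ : d₂.IsTrail)
    (hsum : ∀ e, e ∈ c.edges ↔ Xor (e ∈ d₁.edges) (e ∈ d₂.edges)) :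
    walkLen ℓ c ≤ walkLen ℓ d₁ ∨ walkLen ℓ c ≤ walkLen ℓ d₂ := by
  set E₁ := d₁.edges.toFinset
  set E₂ := d₂.edges.toFinset
  have hE : c.edges.toFinset = E₁ ∆ E₂ := by
    ext e
    simp [E₁, E₂, mem_symmDiff, hsum e, xor_def]
  have hshort := hgeo.sum_inter_le_or_sum_sdiff_le hℓ hc hd₁
  have h₁ : E₁ ∩ E₁ ∆ E₂ = E₁ \ E₂ := by
    ext; simp only [mem_sdiff, mem_symmDiff, mem_inter]; tauto
  have h₂ : E₁ ∆ E₂ \ E₁ = E₂ \ E₁ := by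
    ext; simp only [mem_sdiff, mem_symmDiff]; tauto
  have h₃ : E₁ \ E₁ ∆ E₂ = E₁ ∩ E₂ := by
    ext; simp only [mem_sdiff, mem_symmDiff, mem_inter]; tauto
  rw [hE, h₁, h₂, h₃] at hshort
  rw [hc.isTrail.walkLen_eq_sum, hd₁.walkLen_eq_sum, hd₂.walkLen_eq_sum, hE, sum_symmDiff,
    ← sum_inter_add_sum_sdiff E₁ E₂, ← sum_inter_add_sum_sdiff E₂ E₁, inter_comm E₂ E₁]
  rcases hshort with h | h
  · right; linarith
  · left; linarith

end GeodesicCycle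

section CycleArcs

variable {V : Type*} [DecidableEq V] {G : SimpleGraph V} {ℓ : Sym2 V → ℝ} {v : V}
  {c : G.Walk v v}

theorem SimpleGraph.Walk.IsCycle.exists_arcs (hc : c.IsCycle) {a b : V} (ha : a ∈ c.support)
    (hb : b ∈ c.support) (hab : a ≠ b) :
    ∃ (A₁ : G.Walk a b) (A₂ : G.Walk b a), A₁.IsPath ∧ A₂.IsPath ∧
      A₁.support ⊆ c.support ∧ A₂.support ⊆ c.support ∧
      (∀ e, e ∈ c.edges ↔ e ∈ A₁.edges ∨ e ∈ A₂.edges) ∧ A₁.edges.Disjoint A₂.edges ∧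
      walkLen ℓ c = walkLen ℓ A₁ + walkLen ℓ A₂ := by
  set c' := c.rotate a ha
  have hb' : b ∈ c'.support := (c.mem_support_rotate_iff a ha).2 hb
  have hc' : (c'.takeUntil b hb').append (c'.dropUntil b hb') = c' := c'.take_spec hb'
  have hcyc : ((c'.takeUntil b hb').append (c'.dropUntil b hb')).IsCycle := by
    rw [hc']; exact hc.rotate ha
  have hperm : ((c'.takeUntil b hb').append (c'.dropUntil b hb')).edges.Perm c.edges :=
    by rw [hc']; exact (c.rotate_edges a ha).perm
  refine ⟨_, _, hcyc.isPath_of_append_left (not_nil_of_ne hab.symm),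
    hcyc.isPath_of_append_right (not_nil_of_ne hab),
    fun x hx => (c.mem_support_rotate_iff a ha).1 (c'.support_takeUntil_subset_support hb' hx),
    fun x hx => (c.mem_support_rotate_iff a ha).1 (c'.support_dropUntil_subset_support hb' hx),
    fun e => by rw [← hperm.mem_iff, edges_append, List.mem_append],
    List.disjoint_of_nodup_append (edges_append _ _ ▸ hcyc.isTrail.edges_nodup), ?_⟩
  rw [← walkLen_append]
  exact ((hperm.map ℓ).sum_eq).symm

theorem SimpleGraph.Walk.IsCycle.exists_shortest_path (hℓ : ∀ e ∈ G.edgeSet, 0 ≤ ℓ e)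
    (hc : c.IsCycle) {a b : V} (ha : a ∈ c.support) (hb : b ∈ c.support) :
    ∃ p : G.Walk a b, p.IsPath ∧ (∀ e ∈ p.edges, e ∈ c.edges) ∧
      ∀ r : G.Walk a b, r.IsPath → (∀ e ∈ r.edges, e ∈ c.edges) → walkLen ℓ p ≤ walkLen ℓ r := by
  rcases eq_or_ne a b with rfl | hab
  · exact ⟨nil, .nil, by simp, fun r _ _ => (walkLen_nonneg hℓ r).trans_eq' (by simp)⟩
  obtain ⟨A₁, A₂, hA₁, hA₂, -, -, hmem, hdisj, -⟩ := hc.exists_arcs (ℓ := ℓ) ha hb hab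
  have hEC : c.edges.toFinset = A₂.edges.toFinset ∆ A₁.edges.toFinset := by
    ext e
    simp only [List.mem_toFinset, mem_symmDiff, hmem]
    have := @hdisj e
    tauto
  have hlen : ∀ r : G.Walk a b, r.IsPath → (∀ e ∈ r.edges, e ∈ c.edges) →
      walkLen ℓ r = walkLen ℓ A₁ ∨ walkLen ℓ r = walkLen ℓ A₂.reverse := by
    intro r hr hrc
    have hsub : r.edges.toFinset ∆ A₁.edges.toFinset ⊆ c.edges.toFinset := by
      refine symmDiff_subset_union.trans (union_subset ?_ ?_) <;> intro e he <;>
        rw [List.mem_toFinset] at he ⊢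
      exacts [hrc e he, (hmem e).2 (.inl he)]
    have hdeg : parityDegree (r.edges.toFinset ∆ A₁.edges.toFinset) = 0 := by
      rw [parityDegree_symmDiff, hr.isTrail.parityDegree_edges, hA₁.isTrail.parityDegree_edges,
        pi_add_self]
    rw [walkLen_reverse, hr.isTrail.walkLen_eq_sum, hA₁.isTrail.walkLen_eq_sum,
      hA₂.isTrail.walkLen_eq_sum]
    rcases hc.eq_empty_or_eq_of_parityDegree_eq_zero hsub hdeg with h | h
    · exact .inl (by rw [symmDiff_eq_empty.1 h])
    · exact .inr (by rw [symmDiff_left_inj.1 (h.trans hEC)])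
  have hA₁c : ∀ e ∈ A₁.edges, e ∈ c.edges := fun e he => (hmem e).2 (.inl he)
  have hA₂c : ∀ e ∈ A₂.reverse.edges, e ∈ c.edges := fun e he =>
    (hmem e).2 (.inr (by simpa using he))
  rcases le_total (walkLen ℓ A₁) (walkLen ℓ A₂.reverse) with h | h
  · exact ⟨A₁, hA₁, hA₁c, fun r hr hrc => by rcases hlen r hr hrc with h' | h' <;> linarith⟩
  · exact ⟨A₂.reverse, hA₂.reverse, hA₂c,
      fun r hr hrc => by rcases hlen r hr hrc with h' | h' <;> linarith⟩

end CycleArcs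

section Shortcut

variable {V : Type*} {G : SimpleGraph V} {ℓ : Sym2 V → ℝ} {v : V} {c : G.Walk v v}

def IsShortcut (c : G.Walk v v) (ℓ : Sym2 V → ℝ) {a b : V} (q : G.Walk a b) : Prop :=
  q.IsPath ∧ ∀ r : G.Walk a b, r.IsPath → (∀ e ∈ r.edges, e ∈ c.edges) → walkLen ℓ q < walkLen ℓ r

def IsSumOfTwoShorterCycles (ℓ : Sym2 V → ℝ) (c : G.Walk v v) : Prop :=
  ∃ (v₁ v₂ : V) (d₁ : G.Walk v₁ v₁) (d₂ : G.Walk v₂ v₂),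
    d₁.IsCycle ∧ d₂.IsCycle ∧
    walkLen ℓ d₁ < walkLen ℓ c ∧ walkLen ℓ d₂ < walkLen ℓ c ∧
    ∀ e : Sym2 V, e ∈ c.edges ↔ Xor (e ∈ d₁.edges) (e ∈ d₂.edges)

theorem IsShortcut.ne (hℓ : ∀ e ∈ G.edgeSet, 0 ≤ ℓ e) {a b : V} {q : G.Walk a b}
    (hq : IsShortcut c ℓ q) : a ≠ b := by
  rintro rfl
  have := hq.2 nil .nil (by simp)
  rw [walkLen_nil] at this
  exact this.not_ge (walkLen_nonneg hℓ q)

theorem exists_isShortcut_of_not_isGeodesic [DecidableEq V] (hℓ : ∀ e ∈ G.edgeSet, 0 ≤ ℓ e)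
    (hc : c.IsCycle) (h : ¬IsGeodesic ℓ c) :
    ∃ a ∈ c.support, ∃ b ∈ c.support, ∃ q : G.Walk a b, IsShortcut c ℓ q := by
  simp only [IsGeodesic, not_forall, not_exists, not_and, not_le] at h
  obtain ⟨a, ha, b, hb, h⟩ := h
  obtain ⟨p, hp, hpc, hmin⟩ := hc.exists_shortest_path hℓ ha hb
  obtain ⟨q, hq, hqp⟩ := h p hp hpc
  exact ⟨a, ha, b, hb, q, hq, fun r hr hrc => hqp.trans_le (hmin r hr hrc)⟩

/-- Induction on the length: at an inner vertex on `c` a shortcut splits into two parts, one of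
which is again a shortcut. -/
theorem IsShortcut.exists_inner_vertices_notMem [DecidableEq V]
    (hℓ : ∀ e ∈ G.edgeSet, 0 ≤ ℓ e) {a b : V} (ha : a ∈ c.support) (hb : b ∈ c.support)
    {q : G.Walk a b} (hq : IsShortcut c ℓ q) :
    ∃ a' ∈ c.support, ∃ b' ∈ c.support, ∃ q' : G.Walk a' b', IsShortcut c ℓ q' ∧
      ∀ x ∈ q'.support, x ∈ c.support → x = a' ∨ x = b' := by
  induction hn : q.length using Nat.strong_induction_on generalizing a b with
  | _ n ih =>
    by_cases hoff : ∀ x ∈ q.support, x ∈ c.support → x = a ∨ x = b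
    · exact ⟨a, ha, b, hb, q, hq, hoff⟩
    push Not at hoff
    obtain ⟨x, hxq, hxc, hxa, hxb⟩ := hoff
    have hlen := congrArg length (q.take_spec hxq)
    rw [length_append] at hlen
    have h₁ : 0 < (q.takeUntil x hxq).length :=
      Nat.pos_of_ne_zero fun h => not_nil_of_ne hxa.symm (length_eq_zero_iff.1 h)
    have h₂ : 0 < (q.dropUntil x hxq).length :=
      Nat.pos_of_ne_zero fun h => not_nil_of_ne hxb (length_eq_zero_iff.1 h)
    by_cases hs₁ : IsShortcut c ℓ (q.takeUntil x hxq)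
    · exact ih _ (by omega) ha hxc hs₁ rfl
    by_cases hs₂ : IsShortcut c ℓ (q.dropUntil x hxq)
    · exact ih _ (by omega) hxc hb hs₂ rfl
    simp only [IsShortcut, hq.1.takeUntil hxq, hq.1.dropUntil hxq, true_and, not_forall,
      not_lt] at hs₁ hs₂
    obtain ⟨r₁, hr₁, hr₁c, hr₁q⟩ := hs₁
    obtain ⟨r₂, hr₂, hr₂c, hr₂q⟩ := hs₂
    have hrc : ∀ e ∈ (r₁.append r₂).bypass.edges, e ∈ c.edges := fun e he => by
      have := (r₁.append r₂).edges_bypass_subset_edges he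
      rw [edges_append, List.mem_append] at this
      exact this.elim (hr₁c e) (hr₂c e)
    have := hq.2 _ (r₁.append r₂).bypass_isPath hrc
    have hbypass := walkLen_bypass_le hℓ (r₁.append r₂)
    rw [walkLen_append] at hbypass
    rw [← q.take_spec hxq, walkLen_append] at this
    linarith

theorem IsShortcut.notMem_of_mem_edges {a b : V} {q : G.Walk a b}
    (hq : IsShortcut c ℓ q) (hoff : ∀ x ∈ q.support, x ∈ c.support → x = a ∨ x = b) :
    ∀ e ∈ q.edges, e ∉ c.edges := by
  intro e heq hec
  induction e using Sym2.ind with | _ x y =>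
  have hxy := (q.adj_of_mem_edges heq).ne
  have hab : s(x, y) = s(a, b) := by
    rcases hoff x (q.fst_mem_support_of_mem_edges heq) (c.fst_mem_support_of_mem_edges hec)
      with rfl | rfl <;>
    rcases hoff y (q.snd_mem_support_of_mem_edges heq) (c.snd_mem_support_of_mem_edges hec)
      with rfl | rfl
    exacts [absurd rfl hxy, rfl, Sym2.eq_swap, absurd rfl hxy]
  rw [hab] at heq hec
  have hq' := hq.1.eq_adj_toWalk_of_mem_edges heq
  have := hq.2 q hq.1 (by rw [hq']; simpa using hec)
  exact this.false

theorem SimpleGraph.Walk.IsPath.isCycle_append_of_disjoint {u w : V} {p : G.Walk u w}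
    {q : G.Walk w u} (hp : p.IsPath) (hq : q.IsPath) (huw : u ≠ w)
    (hE : p.edges.Disjoint q.edges) (hV : ∀ x ∈ p.support, x ∈ q.support → x = u ∨ x = w) :
    (p.append q).IsCycle := by
  have hu : u ∉ p.support.tail := (List.nodup_cons.1 (p.cons_tail_support ▸ hp.support_nodup)).1
  have hw : w ∉ q.support.tail := (List.nodup_cons.1 (q.cons_tail_support ▸ hq.support_nodup)).1
  rw [isCycle_def, isTrail_def, edges_append, tail_support_append]
  refine ⟨List.nodup_append'.2 ⟨hp.isTrail.edges_nodup, hq.isTrail.edges_nodup, hE⟩,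
    fun h => not_nil_of_ne huw (nil_append_iff.1 (h ▸ nil_nil)).1,
    List.nodup_append'.2 ⟨hp.support_nodup.tail, hq.support_nodup.tail, fun x hxp hxq => ?_⟩⟩
  rcases hV x (List.mem_of_mem_tail hxp) (List.mem_of_mem_tail hxq) with rfl | rfl
  exacts [hu hxp, hw hxq]

theorem IsShortcut.isSumOfTwoShorterCycles [DecidableEq V] (hℓ : ∀ e ∈ G.edgeSet, 0 ≤ ℓ e)
    (hc : c.IsCycle) {a b : V} (ha : a ∈ c.support) (hb : b ∈ c.support) {q : G.Walk a b}
    (hq : IsShortcut c ℓ q) (hoff : ∀ x ∈ q.support, x ∈ c.support → x = a ∨ x = b) :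
    IsSumOfTwoShorterCycles ℓ c := by
  have hab := hq.ne hℓ
  have hqc := hq.notMem_of_mem_edges hoff
  obtain ⟨A₁, A₂, hA₁, hA₂, hA₁c, hA₂c, hmem, hdisj, hlen⟩ := hc.exists_arcs (ℓ := ℓ) ha hb hab
  have hlt₁ := hq.2 A₁ hA₁ fun e he => (hmem e).2 (.inl he)
  have hlt₂ := hq.2 A₂.reverse hA₂.reverse fun e he => (hmem e).2 (.inr (by simpa using he))
  rw [walkLen_reverse] at hlt₂
  refine ⟨a, a, A₁.append q.reverse, q.append A₂, ?_, ?_, ?_, ?_, ?_⟩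
  · refine hA₁.isCycle_append_of_disjoint hq.1.reverse hab (fun e he₁ he₂ => ?_)
      fun x hx₁ hx₂ => hoff x (by simpa using hx₂) (hA₁c hx₁)
    exact hqc e (by simpa using he₂) ((hmem e).2 (.inl he₁))
  · exact hq.1.isCycle_append_of_disjoint hA₂ hab
      (fun e he₁ he₂ => hqc e he₁ ((hmem e).2 (.inr he₂))) fun x hx₁ hx₂ => hoff x hx₁ (hA₂c hx₂)
  · rw [walkLen_append, walkLen_reverse]
    linarith
  · rw [walkLen_append]
    linarith
  · intro e
    have := @hdisj e
    have := hqc e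
    simp only [edges_append, edges_reverse, List.mem_append, List.mem_reverse, hmem,
      xor_def] at this ⊢
    tauto

end Shortcut

theorem geodesic_iff_not_sum_of_two_shorter_cycles_general
    {V : Type} (G : SimpleGraph V) (ℓ : Sym2 V → ℝ)
    (hℓpos : ∀ e ∈ G.edgeSet, 0 < ℓ e)
    (v : V) (c : G.Walk v v) (hc : c.IsCycle) :
    IsGeodesic ℓ c ↔
      ¬ ∃ (v₁ v₂ : V) (d₁ : G.Walk v₁ v₁) (d₂ : G.Walk v₂ v₂),
        d₁.IsCycle ∧ d₂.IsCycle ∧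
        walkLen ℓ d₁ < walkLen ℓ c ∧ walkLen ℓ d₂ < walkLen ℓ c ∧
        ∀ e : Sym2 V, e ∈ c.edges ↔ Xor' (e ∈ d₁.edges) (e ∈ d₂.edges) := by
  classical
  have hℓ : ∀ e ∈ G.edgeSet, 0 ≤ ℓ e := fun e he => (hℓpos e he).le
  change IsGeodesic ℓ c ↔ ¬IsSumOfTwoShorterCycles ℓ c
  refine ⟨fun hgeo ⟨_, _, d₁, d₂, hd₁, hd₂, hlt₁, hlt₂, hsum⟩ => ?_, fun hsum => ?_⟩
  · rcases hgeo.walkLen_le_or_walkLen_le hℓ hc hd₁.isTrail hd₂.isTrail hsum with h | h <;> linarith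
  · by_contra hgeo
    obtain ⟨a, ha, b, hb, q, hq⟩ := exists_isShortcut_of_not_isGeodesic hℓ hc hgeo
    obtain ⟨a', ha', b', hb', q', hq', hoff⟩ := hq.exists_inner_vertices_notMem hℓ ha hb
    exact hsum (hq'.isSumOfTwoShorterCycles hℓ hc ha' hb' hoff)

theorem geodesic_iff_not_sum_of_two_shorter_cycles
    {V : Type} [Fintype V] (G : SimpleGraph V) (ℓ : Sym2 V → ℝ)
    (hℓpos : ∀ e ∈ G.edgeSet, 0 < ℓ e)
    (v : V) (c : G.Walk v v) (hc : c.IsCycle) :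
    IsGeodesic ℓ c ↔
      ¬ ∃ (v₁ v₂ : V) (d₁ : G.Walk v₁ v₁) (d₂ : G.Walk v₂ v₂),
        d₁.IsCycle ∧ d₂.IsCycle ∧
        walkLen ℓ d₁ < walkLen ℓ c ∧ walkLen ℓ d₂ < walkLen ℓ c ∧
        ∀ e : Sym2 V, e ∈ c.edges ↔ Xor' (e ∈ d₁.edges) (e ∈ d₂.edges) :=
  geodesic_iff_not_sum_of_two_shorter_cycles_general G ℓ hℓpos v c hc
end

section
/- Let n ≥ 2 be an integer, G_n the (n × n)-grid, and C_n the cycle bounding the outer face of its natural plane drawing (the cycle on the vertices (i,j) with i ∈ {1,n} or j ∈ {1,n}). Then for any two vertices u, v of C_n, the distance between u and v within G_n is at least half of their distance within C_n, i.e., d_{G_n}(u,v) ≥ d_{C_n}(u,v)/2. -/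
open SimpleGraph

/-- Adjacency of points of `ℕ × ℕ` at Euclidean distance 1. -/
def gridAdj (a b : ℕ × ℕ) : Prop :=
  (a.1 = b.1 ∧ (a.2 + 1 = b.2 ∨ b.2 + 1 = a.2)) ∨
  (a.2 = b.2 ∧ (a.1 + 1 = b.1 ∨ b.1 + 1 = a.1))

/-- The vertex set of the `n × n` grid: pairs `(i, j)` with `1 ≤ i, j ≤ n`. -/
def GridV (n : ℕ) : Type := {p : ℕ × ℕ // 1 ≤ p.1 ∧ p.1 ≤ n ∧ 1 ≤ p.2 ∧ p.2 ≤ n}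

/-- The `n × n` grid graph. -/
def gridGraph (n : ℕ) : SimpleGraph (GridV n) where
  Adj a b := gridAdj a.1 b.1
  symm := by constructor; intro a b h; unfold gridAdj at *; tauto
  loopless := by constructor; intro a h; unfold gridAdj at h; omega

/-- The boundary vertices of the `n × n` grid. -/
def gridBoundary (n : ℕ) : Set (GridV n) :=
  {v | v.1.1 = 1 ∨ v.1.1 = n ∨ v.1.2 = 1 ∨ v.1.2 = n}

/-- The outer cycle `C_n` of the `n × n` grid, as a graph on the grid's vertices:
the edges of the grid joining two boundary vertices. -/
def gridOuterCycle (n : ℕ) : SimpleGraph (GridV n) where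
  Adj a b := gridAdj a.1 b.1 ∧ a ∈ gridBoundary n ∧ b ∈ gridBoundary n
  symm := by
    constructor
    intro a b h
    refine ⟨?_, h.2.2, h.2.1⟩
    have := h.1; unfold gridAdj at *; tauto
  loopless := by constructor; intro a h; have := h.1; unfold gridAdj at this; omega

/-!
Number the vertices of `C_n` as `0, …, 4(n-1) - 1` in cyclic order. Two boundary vertices at
positions `a ≤ b` are joined in `C_n` by arcs of lengths `b - a` and `4(n-1) - (b - a)`, while
every walk in the grid is at least as long as the ℓ¹ distance of its endpoints. Checking the
pairs of sides on which the two vertices lie shows that the shorter arc is at most twice that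
ℓ¹ distance.
-/

def gridManhattan (p q : ℕ × ℕ) : ℕ := p.1.dist q.1 + p.2.dist q.2

lemma gridManhattan_comm (p q : ℕ × ℕ) : gridManhattan p q = gridManhattan q p := by
  simp only [gridManhattan, Nat.dist_comm]

lemma gridManhattan_le_length {n : ℕ} {u v : GridV n} (p : (gridGraph n).Walk u v) :
    gridManhattan u.1 v.1 ≤ p.length := by
  induction p with
  | nil => simp [gridManhattan]
  | @cons a b c hab p ih =>
    have hab' : gridAdj a.1 b.1 := hab
    simp only [gridManhattan, Nat.dist, gridAdj, Walk.length_cons] at hab' ih ⊢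
    omega

lemma gridManhattan_le_dist {n : ℕ} {u v : GridV n} (h : (gridGraph n).Reachable u v) :
    gridManhattan u.1 v.1 ≤ (gridGraph n).dist u v := by
  obtain ⟨p, hp⟩ := h.exists_walk_length_eq_dist
  exact hp ▸ gridManhattan_le_length p

namespace SimpleGraph

variable {V : Type*} {G : SimpleGraph V} {f : ℕ → V}

lemma exists_walk_length_eq_sub_of_adj_succ (hf : ∀ k, G.Adj (f k) (f (k + 1))) {a b : ℕ}
    (hab : a ≤ b) : ∃ p : G.Walk (f a) (f b), p.length = b - a := by
  induction b, hab using Nat.le_induction with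
  | base => exact ⟨Walk.nil, by simp⟩
  | succ b hab ih =>
    obtain ⟨p, hp⟩ := ih
    exact ⟨p.concat (hf b), by rw [Walk.length_concat, hp]; omega⟩

lemma reachable_of_adj_succ (hf : ∀ k, G.Adj (f k) (f (k + 1))) (a b : ℕ) :
    G.Reachable (f a) (f b) := by
  wlog hab : a ≤ b generalizing a b
  · exact (this b a (by omega)).symm
  obtain ⟨p, -⟩ := exists_walk_length_eq_sub_of_adj_succ hf hab
  exact ⟨p⟩

lemma dist_le_of_adj_succ (hf : ∀ k, G.Adj (f k) (f (k + 1))) {a b : ℕ} (hab : a ≤ b) :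
    G.dist (f a) (f b) ≤ b - a := by
  obtain ⟨p, hp⟩ := exists_walk_length_eq_sub_of_adj_succ hf hab
  exact hp ▸ dist_le p

lemma dist_le_min_of_adj_succ_of_periodic (hf : ∀ k, G.Adj (f k) (f (k + 1))) {L : ℕ}
    (hL : Function.Periodic f L) {a b : ℕ} (hab : a ≤ b) (hb : b ≤ a + L) :
    G.dist (f a) (f b) ≤ min (b - a) (a + L - b) := by
  refine le_min (dist_le_of_adj_succ hf hab) ?_
  rw [dist_comm, ← hL a]
  exact dist_le_of_adj_succ hf hb

end SimpleGraph

/-- The `m`-th vertex of `C_n`, for `m < 4 * (n - 1)`, walking around from `(1, 1)` through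
`(1, n)`, `(n, n)` and `(n, 1)`. -/
def boundaryPoint (n m : ℕ) : ℕ × ℕ :=
  if m < n - 1 then (1, m + 1)
  else if m < 2 * (n - 1) then (m + 2 - n, n)
  else if m < 3 * (n - 1) then (n, 3 * n - 2 - m)
  else (4 * n - 3 - m, 1)

section BoundaryParametrization

variable {n : ℕ}

lemma boundaryPoint_mem {m : ℕ} (hm : m < 4 * (n - 1)) :
    1 ≤ (boundaryPoint n m).1 ∧ (boundaryPoint n m).1 ≤ n ∧
      1 ≤ (boundaryPoint n m).2 ∧ (boundaryPoint n m).2 ≤ n := by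
  unfold boundaryPoint; split_ifs <;> dsimp only <;> omega

lemma gridAdj_boundaryPoint_succ {m : ℕ} (hm : m < 4 * (n - 1)) :
    gridAdj (boundaryPoint n m) (boundaryPoint n ((m + 1) % (4 * (n - 1)))) := by
  obtain hlt | heq : m + 1 < 4 * (n - 1) ∨ m + 1 = 4 * (n - 1) := by omega
  · rw [Nat.mod_eq_of_lt hlt]
    unfold boundaryPoint gridAdj; split_ifs <;> dsimp only <;> omega
  · rw [heq, Nat.mod_self]
    unfold boundaryPoint gridAdj; split_ifs <;> dsimp only <;> omega

lemma min_le_two_mul_gridManhattan_boundaryPoint {a b : ℕ} (hab : a ≤ b)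
    (hb : b < 4 * (n - 1)) :
    min (b - a) (a + 4 * (n - 1) - b) ≤
      2 * gridManhattan (boundaryPoint n a) (boundaryPoint n b) := by
  unfold boundaryPoint gridManhattan Nat.dist; split_ifs <;> dsimp only <;> omega

variable (hn : 2 ≤ n)

def boundaryVertex (k : ℕ) : GridV n :=
  ⟨boundaryPoint n (k % (4 * (n - 1))), boundaryPoint_mem (Nat.mod_lt _ (by omega))⟩

lemma boundaryVertex_val_of_lt {k : ℕ} (hk : k < 4 * (n - 1)) :
    (boundaryVertex hn k).1 = boundaryPoint n k :=
  congrArg (boundaryPoint n) (Nat.mod_eq_of_lt hk)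

lemma boundaryVertex_mem_gridBoundary (k : ℕ) : boundaryVertex hn k ∈ gridBoundary n := by
  change (boundaryPoint n _).1 = 1 ∨ (boundaryPoint n _).1 = n ∨ (boundaryPoint n _).2 = 1 ∨
    (boundaryPoint n _).2 = n
  unfold boundaryPoint; split_ifs <;> simp

lemma boundaryVertex_periodic : Function.Periodic (boundaryVertex hn) (4 * (n - 1)) :=
  fun k => Subtype.ext (by simp only [boundaryVertex, Nat.add_mod_right])

lemma gridOuterCycle_adj_boundaryVertex_succ (k : ℕ) :
    (gridOuterCycle n).Adj (boundaryVertex hn k) (boundaryVertex hn (k + 1)) := by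
  refine ⟨?_, boundaryVertex_mem_gridBoundary hn k, boundaryVertex_mem_gridBoundary hn (k + 1)⟩
  change gridAdj (boundaryPoint n _) (boundaryPoint n _)
  rw [← Nat.mod_add_mod]
  exact gridAdj_boundaryPoint_succ (Nat.mod_lt _ (by omega))

lemma exists_boundaryVertex_eq {v : GridV n} (hv : v ∈ gridBoundary n) :
    ∃ k < 4 * (n - 1), boundaryVertex hn k = v := by
  obtain ⟨⟨i, j⟩, hij⟩ := v
  change i = 1 ∨ i = n ∨ j = 1 ∨ j = n at hv
  change 1 ≤ i ∧ i ≤ n ∧ 1 ≤ j ∧ j ≤ n at hij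
  let k := if i = 1 then j - 1 else if j = n then n + i - 2 else if i = n then 3 * n - 2 - j
    else 4 * n - 3 - i
  have hk : k < 4 * (n - 1) := by simp only [k]; split_ifs <;> omega
  refine ⟨k, hk, Subtype.ext ?_⟩
  rw [boundaryVertex_val_of_lt hn hk]
  simp only [k, boundaryPoint]
  split_ifs <;> simp only [Prod.mk.injEq] <;> omega

end BoundaryParametrization

section OuterCycle

variable {n : ℕ} {u v : GridV n}

lemma gridOuterCycle_le_gridGraph : gridOuterCycle n ≤ gridGraph n := fun _ _ h => h.1

lemma gridOuterCycle_reachable (hn : 2 ≤ n) (hu : u ∈ gridBoundary n)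
    (hv : v ∈ gridBoundary n) : (gridOuterCycle n).Reachable u v := by
  obtain ⟨a, -, rfl⟩ := exists_boundaryVertex_eq hn hu
  obtain ⟨b, -, rfl⟩ := exists_boundaryVertex_eq hn hv
  exact reachable_of_adj_succ (gridOuterCycle_adj_boundaryVertex_succ hn) a b

lemma gridOuterCycle_dist_le_two_mul_gridManhattan (hn : 2 ≤ n) (hu : u ∈ gridBoundary n)
    (hv : v ∈ gridBoundary n) : (gridOuterCycle n).dist u v ≤ 2 * gridManhattan u.1 v.1 := by
  obtain ⟨a, ha, rfl⟩ := exists_boundaryVertex_eq hn hu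
  obtain ⟨b, hb, rfl⟩ := exists_boundaryVertex_eq hn hv
  clear hu hv
  wlog hab : a ≤ b generalizing a b
  · rw [dist_comm, gridManhattan_comm]
    exact this b hb a ha (by omega)
  calc (gridOuterCycle n).dist (boundaryVertex hn a) (boundaryVertex hn b)
      ≤ min (b - a) (a + 4 * (n - 1) - b) :=
        dist_le_min_of_adj_succ_of_periodic (gridOuterCycle_adj_boundaryVertex_succ hn)
          (boundaryVertex_periodic hn) hab (by omega)
    _ ≤ 2 * gridManhattan (boundaryPoint n a) (boundaryPoint n b) :=
        min_le_two_mul_gridManhattan_boundaryPoint hab hb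
    _ = 2 * gridManhattan (boundaryVertex hn a).1 (boundaryVertex hn b).1 := by
        rw [boundaryVertex_val_of_lt hn ha, boundaryVertex_val_of_lt hn hb]

end OuterCycle

theorem grid_distance_distortion (n : ℕ) (hn : 2 ≤ n) :
    ∀ u v : GridV n, u ∈ gridBoundary n → v ∈ gridBoundary n →
      (gridOuterCycle n).dist u v ≤ 2 * (gridGraph n).dist u v := by
  intro u v hu hv
  have hreach := (gridOuterCycle_reachable hn hu hv).mono gridOuterCycle_le_gridGraph
  calc (gridOuterCycle n).dist u v ≤ 2 * gridManhattan u.1 v.1 :=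
        gridOuterCycle_dist_le_two_mul_gridManhattan hn hu hv
    _ ≤ 2 * (gridGraph n).dist u v := Nat.mul_le_mul_left 2 (gridManhattan_le_dist hreach)
end

section
/- Let G be a graph, C ⊆ G a cycle, and 𝒟 a family of cycles of G such that C is the 𝔽₂-sum of 𝒟. Let ℛ be a family of pairwise disjoint vertex-sets of G such that no cycle D ∈ 𝒟 meets two distinct sets of ℛ. Then for every R ∈ ℛ and every connected component Q of G − ⋃ℛ, the number of edges of C with one endpoint in Q and the other in R is even. -/
open SimpleGraph


variable {V : Type*}

def crossB (f : V → Bool) : Sym2 V → Bool :=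
  Sym2.lift ⟨fun x y => xor (f x) (f y), fun _ _ => Bool.xor_comm _ _⟩

lemma crossB_mk (f : V → Bool) (x y : V) : crossB f s(x, y) = xor (f x) (f y) := rfl

lemma walk_countP_crossB {G : SimpleGraph V} (f : V → Bool) {a b : V} (p : G.Walk a b) :
    Even (p.edges.countP (fun e => crossB f e)) ↔ f a = f b := by
  have hb : ∀ b : Bool, (if b = true then 1 else 0) = b.toNat := by intro b; cases b <;> rfl
  induction p with
  | nil => simp
  | @cons x y z hadj q ih =>
    rw [SimpleGraph.Walk.edges_cons, List.countP_cons]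
    rw [Nat.even_add, hb, crossB_mk]
    rw [show (Even (List.countP (fun e => crossB f e) q.edges)) ↔ f y = f z from ih]
    cases hfx : f x <;> cases hfy : f y <;> cases hfz : f z <;> simp

lemma closed_walk_even_cross {G : SimpleGraph V} (f : V → Bool) {v : V} (w : G.Walk v v)
    (hnd : w.edges.Nodup) :
    Even {e : Sym2 V | e ∈ w.edges ∧ crossB f e = true}.ncard := by
  classical
  have h1 : {e : Sym2 V | e ∈ w.edges ∧ crossB f e = true}
      = ↑((w.edges.filter (fun e => crossB f e)).toFinset) := by
    ext e; simp [List.mem_filter]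
  rw [h1, Set.ncard_coe_finset, List.toFinset_card_of_nodup (hnd.filter _),
    ← List.countP_eq_length_filter]
  exact (walk_countP_crossB f w).mpr rfl

lemma ncard_setOf_eq_card_filter {α : Type*} [Fintype α] (P : α → Prop) [DecidablePred P] :
    {x | P x}.ncard = (Finset.univ.filter P).card := by
  rw [← Set.ncard_coe_finset]; congr 1; ext x; simp

theorem even_edges_between_component_and_set
    {V : Type} [Fintype V] (G : SimpleGraph V)
    (v : V) (c : G.Walk v v) (hc : c.IsCycle)
    (ι : Type) [Fintype ι] (u : ι → V) (D : ∀ i, G.Walk (u i) (u i))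
    (hD : ∀ i, (D i).IsCycle)
    (hsum : ∀ e : Sym2 V, e ∈ c.edges ↔ Odd {i : ι | e ∈ (D i).edges}.ncard)
    (R : Set (Set V))
    (hdisj : ∀ A ∈ R, ∀ B ∈ R, A ≠ B → Disjoint A B)
    (hnomeet : ∀ i : ι, ∀ A ∈ R, ∀ B ∈ R, A ≠ B →
      ¬ ((∃ x ∈ (D i).support, x ∈ A) ∧ (∃ x ∈ (D i).support, x ∈ B))) :
    ∀ A ∈ R, ∀ K : (G.induce (⋃₀ R)ᶜ).ConnectedComponent,
      Even {e : Sym2 V | e ∈ c.edges ∧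
        ∃ x ∈ Subtype.val '' K.supp, ∃ y ∈ A, e = s(x, y)}.ncard := by
  classical
  intro A hA K
  set Q : Set V := Subtype.val '' K.supp with hQdef
  set T : Sym2 V → Prop := fun e => ∃ x ∈ Q, ∃ y ∈ A, e = s(x, y) with hTdef
  set f : V → Bool := fun x => decide (x ∈ Q) with hfdef
  have hQcompl : ∀ x ∈ Q, x ∈ (⋃₀ R)ᶜ := by
    rintro x ⟨x', _, rfl⟩; exact x'.2
  have hclose : ∀ x ∈ Q, ∀ y, G.Adj x y → y ∈ (⋃₀ R)ᶜ → y ∈ Q := by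
    rintro x ⟨x', hx', rfl⟩ y hadj hy
    refine ⟨⟨y, hy⟩, ?_, rfl⟩
    have hadj' : (G.induce (⋃₀ R)ᶜ).Adj x' ⟨y, hy⟩ := by
      simpa using hadj
    rw [ConnectedComponent.mem_supp_iff] at hx' ⊢
    rw [← hx']
    exact ConnectedComponent.sound hadj'.symm.reachable
  -- each cycle D i has an even number of Q-A edges
  have hDeven : ∀ i : ι, Even {e : Sym2 V | e ∈ (D i).edges ∧ T e}.ncard := by
    intro i
    by_cases hmeet : ∃ x ∈ (D i).support, x ∈ A
    · have key : ∀ x y : V, s(x, y) ∈ (D i).edges → x ∈ Q → y ∉ Q → y ∈ A := by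
        intro x y he hx hy
        have hadj : G.Adj x y := (D i).adj_of_mem_edges he
        have hysupp : y ∈ (D i).support := (D i).snd_mem_support_of_mem_edges he
        by_cases hyR : y ∈ ⋃₀ R
        · obtain ⟨B, hB, hyB⟩ := hyR
          by_cases hBA : B = A
          · exact hBA ▸ hyB
          · exact absurd ⟨hmeet, ⟨y, hysupp, hyB⟩⟩
              (hnomeet i A hA B hB (fun h => hBA h.symm))
        · exact absurd (hclose x hx y hadj hyR) hy
      have hset : {e : Sym2 V | e ∈ (D i).edges ∧ T e}
          = {e : Sym2 V | e ∈ (D i).edges ∧ crossB f e = true} := by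
        ext e
        simp only [Set.mem_setOf_eq, hTdef]
        constructor
        · rintro ⟨he, x, hx, y, hy, rfl⟩
          refine ⟨he, ?_⟩
          have hyQ : y ∉ Q := fun hyQ => (hQcompl y hyQ) ⟨A, hA, hy⟩
          simp [crossB_mk, hfdef, hx, hyQ]
        · rintro ⟨he, hcr⟩
          refine ⟨he, ?_⟩
          induction e using Sym2.inductionOn with
          | hf x y =>
            rw [crossB_mk] at hcr
            have hne : f x ≠ f y := by
              intro h; rw [h] at hcr; simp at hcr
            by_cases hx : x ∈ Q
            · have hy : y ∉ Q := by
                intro hy; exact hne (by simp [hfdef, hx, hy])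
              exact ⟨x, hx, y, key x y he hx hy, rfl⟩
            · have hy : y ∈ Q := by
                by_contra hy; exact hne (by simp [hfdef, hx, hy])
              exact ⟨y, hy, x, key y x (Sym2.eq_swap ▸ he) hy hx, Sym2.eq_swap⟩
      rw [hset]
      exact closed_walk_even_cross f (D i) (hD i).edges_nodup
    · have hset : {e : Sym2 V | e ∈ (D i).edges ∧ T e} = ∅ := by
        ext e
        simp only [Set.mem_setOf_eq, Set.mem_empty_iff_false, iff_false, not_and, hTdef]
        rintro he ⟨x, hx, y, hy, rfl⟩
        exact hmeet ⟨y, (D i).snd_mem_support_of_mem_edges he, hy⟩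
      rw [hset]
      simp
  -- now the counting argument in ZMod 2
  have hzmod : ∀ n : ℕ, Even n ↔ (n : ZMod 2) = 0 := by
    intro n
    rw [ZMod.natCast_eq_zero_iff]
    exact even_iff_two_dvd
  have hcard : ∀ {w : V} (p : G.Walk w w),
      {e : Sym2 V | e ∈ p.edges ∧ T e}.ncard
        = (Finset.univ.filter (fun e : Sym2 V => e ∈ p.edges ∧ T e)).card := by
    intro w p
    exact ncard_setOf_eq_card_filter _
  rw [hcard c, hzmod]
  have step1 : ((Finset.univ.filter (fun e : Sym2 V => e ∈ c.edges ∧ T e)).card : ZMod 2)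
      = ∑ e : Sym2 V, if T e then (if e ∈ c.edges then (1 : ZMod 2) else 0) else 0 := by
    rw [Finset.card_filter, Nat.cast_sum]
    apply Finset.sum_congr rfl
    intro e _
    by_cases hT : T e <;> by_cases hce : e ∈ c.edges <;> simp [hT, hce, and_comm]
  have step2 : ∀ e : Sym2 V, (if e ∈ c.edges then (1 : ZMod 2) else 0)
      = ((Finset.univ.filter (fun i : ι => e ∈ (D i).edges)).card : ZMod 2) := by
    intro e
    have hn : {i : ι | e ∈ (D i).edges}.ncard
        = (Finset.univ.filter (fun i : ι => e ∈ (D i).edges)).card :=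
      ncard_setOf_eq_card_filter _
    by_cases hce : e ∈ c.edges
    · have hodd : Odd {i : ι | e ∈ (D i).edges}.ncard := (hsum e).mp hce
      rw [hn] at hodd
      rw [if_pos hce, ← ZMod.natCast_mod, Nat.odd_iff.mp hodd]
      rfl
    · have heven : ¬ Odd {i : ι | e ∈ (D i).edges}.ncard := fun h => hce ((hsum e).mpr h)
      rw [Nat.not_odd_iff_even, hn] at heven
      rw [if_neg hce, ← ZMod.natCast_mod, Nat.even_iff.mp heven]
      rfl
  rw [step1]
  have step3 : ∑ e : Sym2 V, (if T e then (if e ∈ c.edges then (1 : ZMod 2) else 0) else 0)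
      = ∑ i : ι, ((Finset.univ.filter (fun e : Sym2 V => e ∈ (D i).edges ∧ T e)).card : ZMod 2) := by
    calc ∑ e : Sym2 V, (if T e then (if e ∈ c.edges then (1 : ZMod 2) else 0) else 0)
        = ∑ e : Sym2 V, ∑ i : ι, (if e ∈ (D i).edges ∧ T e then (1 : ZMod 2) else 0) := by
          apply Finset.sum_congr rfl
          intro e _
          by_cases hT : T e
          · rw [if_pos hT, step2 e, Finset.card_filter, Nat.cast_sum]
            apply Finset.sum_congr rfl
            intro i _
            by_cases hDe : e ∈ (D i).edges <;> simp [hDe, hT]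
          · rw [if_neg hT]
            rw [Finset.sum_eq_zero]
            intro i _
            simp [hT]
      _ = ∑ i : ι, ∑ e : Sym2 V, (if e ∈ (D i).edges ∧ T e then (1 : ZMod 2) else 0) :=
          Finset.sum_comm
      _ = ∑ i : ι, ((Finset.univ.filter (fun e : Sym2 V => e ∈ (D i).edges ∧ T e)).card : ZMod 2) := by
          apply Finset.sum_congr rfl
          intro i _
          rw [Finset.card_filter, Nat.cast_sum]
          apply Finset.sum_congr rfl
          intro e _
          split <;> simp
  rw [step3]
  apply Finset.sum_eq_zero
  intro i _
  have := hDeven i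
  rw [hcard (D i), hzmod] at this
  exact this
end
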